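/- arXiv:2308.10346 — 4 statements merged into one kernel-verified Lean document; each statement's English description precedes it below -/
import Mathlib

section
/- Let d, p ≥ 1, let Ω ∈ ℝ^{p×p} be positive definite, let Q₂ ∈ ℝ^{p×d} be such that H := Q₂ᵀΩ⁻¹Q₂ is positive definite, let c̃ ∈ ℝ^d, t ∈ ℝ^p, θ ∈ ℝ, ν > 0. Set Q̃₁ = −Q₂c̃, k = Q₂ᵀΩ⁻¹t, σ² = (ν⁻¹ + c̃ᵀHc̃)⁻¹, Σ_b = H⁻¹ + ν c̃c̃ᵀ, μ_b = Σ_b(−k + σ²Hc̃(ν⁻¹θ + c̃ᵀk)), and for b ∈ ℝ^d set μ_θ̂(b) = σ²(ν⁻¹θ + c̃ᵀk + c̃ᵀHb). Then Σ_b is positive definite and there exists a constant C > 0, not depending on θ̂ or b, such that for all θ̂ ∈ ℝ and all b ∈ ℝ^d: φ(θ̂; θ, ν) · φ(Q̃₁θ̂ + Q₂b + t; 0, Ω) = C · φ(θ̂; μ_θ̂(b), σ²) · φ(b; μ_b, Σ_b). -/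
/-!
With `x = Q₂ (b - θ̂ c̃) + t`, the exponent of the left-hand side is a quadratic form in `(θ̂, b)`.
Completing the square in `θ̂` produces the conditional term `(θ̂ - μ_θ̂(b))² / σ²`, and the part
left over in `b` is the quadratic form of `H - σ² (H c̃)(H c̃)ᵀ`, which is `Σ_b⁻¹` by the
Sherman–Morrison formula. Completing the square in `b` then leaves a constant, which together with
the normalising factors of the four densities gives `C`.
-/

open MeasureTheory Matrix Real

/-- Multivariate Gaussian density `φ(x; μ, S)` for covariance `S`. -/
noncomputable def mvGauss {d : ℕ} (S : Matrix (Fin d) (Fin d) ℝ) (μ x : Fin d → ℝ) : ℝ :=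
  (2 * π) ^ (-(d : ℝ) / 2) * S.det ^ (-(1 : ℝ) / 2) *
    Real.exp (-(1 / 2) * ((x - μ) ⬝ᵥ (S⁻¹ *ᵥ (x - μ))))

/-- Univariate normal density `φ(x; m, s²)` with mean `m`, variance `s2`. -/
noncomputable def gauss1 (m s2 x : ℝ) : ℝ :=
  (Real.sqrt (2 * π * s2))⁻¹ * Real.exp (-(x - m) ^ 2 / (2 * s2))

namespace Matrix

section CommRing

variable {m n R : Type*} [Fintype m] [Fintype n] [CommRing R]

theorem IsSymm.dotProduct_mulVec_comm {A : Matrix n n R} (hA : A.IsSymm) (x y : n → R) :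
    x ⬝ᵥ (A *ᵥ y) = y ⬝ᵥ (A *ᵥ x) := by
  rw [dotProduct_mulVec, ← mulVec_transpose, hA.eq, dotProduct_comm]

theorem IsSymm.dotProduct_mulVec_sub_smul {A : Matrix n n R} (hA : A.IsSymm) (x y : n → R)
    (a : R) :
    (x - a • y) ⬝ᵥ (A *ᵥ (x - a • y)) =
      x ⬝ᵥ (A *ᵥ x) - 2 * a * (y ⬝ᵥ (A *ᵥ x)) + a ^ 2 * (y ⬝ᵥ (A *ᵥ y)) := by
  simp only [mulVec_sub, mulVec_smul, dotProduct_sub, sub_dotProduct, dotProduct_smul,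
    smul_dotProduct, smul_eq_mul, hA.dotProduct_mulVec_comm x y]
  ring

theorem dotProduct_mulVec_affine {A : Matrix m m R} (hA : A.IsSymm) (Q : Matrix m n R)
    (y : n → R) (t : m → R) :
    (Q *ᵥ y + t) ⬝ᵥ (A *ᵥ (Q *ᵥ y + t)) =
      y ⬝ᵥ ((Qᵀ * A * Q) *ᵥ y) + 2 * (y ⬝ᵥ ((Qᵀ * A) *ᵥ t)) + t ⬝ᵥ (A *ᵥ t) := by
  have hQ : ∀ z, (Q *ᵥ y) ⬝ᵥ z = y ⬝ᵥ (Qᵀ *ᵥ z) := fun z => by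
    rw [dotProduct_comm, dotProduct_mulVec, ← mulVec_transpose, dotProduct_comm]
  rw [mulVec_add, dotProduct_add, add_dotProduct, add_dotProduct, hQ, hQ,
    hA.dotProduct_mulVec_comm t, hQ, ← mulVec_mulVec, ← mulVec_mulVec, ← mulVec_mulVec]
  ring

theorem dotProduct_sub_smul_vecMulVec_mulVec (A : Matrix n n R) (s : R) (u x : n → R) :
    x ⬝ᵥ ((A - s • vecMulVec u u) *ᵥ x) = x ⬝ᵥ (A *ᵥ x) - s * (u ⬝ᵥ x) ^ 2 := by
  rw [sub_mulVec, smul_mulVec, vecMulVec_mulVec, dotProduct_sub, dotProduct_smul,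
    dotProduct_smul, dotProduct_comm x u]
  simp only [MulOpposite.smul_eq_mul_unop, MulOpposite.unop_op, smul_eq_mul]
  ring

theorem dotProduct_inv_mulVec_sub_mulVec [DecidableEq n] {S : Matrix n n R} (hS : S.IsSymm)
    (hdet : IsUnit S.det) (x w : n → R) :
    (x - S *ᵥ w) ⬝ᵥ (S⁻¹ *ᵥ (x - S *ᵥ w)) =
      x ⬝ᵥ (S⁻¹ *ᵥ x) - 2 * (x ⬝ᵥ w) + (S *ᵥ w) ⬝ᵥ w := by
  have hw : S⁻¹ *ᵥ (S *ᵥ w) = w := by rw [mulVec_mulVec, nonsing_inv_mul S hdet, one_mulVec]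
  rw [mulVec_sub, hw, dotProduct_sub, sub_dotProduct, sub_dotProduct,
    hS.inv.dotProduct_mulVec_comm (S *ᵥ w), hw]
  ring

end CommRing

/-- Sherman–Morrison formula. -/
theorem inv_add_smul_vecMulVec {n K : Type*} [Fintype n] [DecidableEq n] [Field K]
    {H : Matrix n n K} (hH : H.IsSymm) (hdet : IsUnit H.det) (c : n → K) {ν : K} (hν : ν ≠ 0)
    (hs : ν⁻¹ + c ⬝ᵥ (H *ᵥ c) ≠ 0) :
    (H⁻¹ + ν • vecMulVec c c)⁻¹ =
      H - (ν⁻¹ + c ⬝ᵥ (H *ᵥ c))⁻¹ • vecMulVec (H *ᵥ c) (H *ᵥ c) := by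
  set σ := (ν⁻¹ + c ⬝ᵥ (H *ᵥ c))⁻¹
  have hc : H⁻¹ *ᵥ (H *ᵥ c) = c := by rw [mulVec_mulVec, nonsing_inv_mul H hdet, one_mulVec]
  have hcH : c ᵥ* H = H *ᵥ c := by rw [← mulVec_transpose, hH.eq]
  have hcoef : ν - σ - ν * σ * (c ⬝ᵥ (H *ᵥ c)) = 0 := by
    linear_combination (-ν) * inv_mul_cancel₀ hs + σ * mul_inv_cancel₀ hν
  apply inv_eq_right_inv
  rw [add_mul, mul_sub, mul_sub, nonsing_inv_mul H hdet, mul_smul_comm, mul_vecMulVec, hc,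
    smul_mul_assoc, vecMulVec_mul, hcH, smul_mul_assoc, mul_smul_comm, vecMulVec_mul_vecMulVec,
    vecMulVec_smul, smul_smul]
  linear_combination (norm := module) hcoef • vecMulVec c (H *ᵥ c)

end Matrix

theorem joint_exponent_eq_conditional_add_marginal {n : Type*} [Fintype n]
    {H : Matrix n n ℝ} (hH : H.IsSymm) (c k b : n → ℝ) {ν σ2 : ℝ}
    (hσ2 : σ2 * (ν⁻¹ + c ⬝ᵥ (H *ᵥ c)) = 1) (θ θh : ℝ) :
    (θh - θ) ^ 2 / ν + (b - θh • c) ⬝ᵥ (H *ᵥ (b - θh • c)) + 2 * ((b - θh • c) ⬝ᵥ k) =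
      (θh - σ2 * (ν⁻¹ * θ + c ⬝ᵥ k + c ⬝ᵥ (H *ᵥ b))) ^ 2 / σ2 +
        b ⬝ᵥ ((H - σ2 • vecMulVec (H *ᵥ c) (H *ᵥ c)) *ᵥ b) -
        2 * (b ⬝ᵥ (-k + (σ2 * (ν⁻¹ * θ + c ⬝ᵥ k)) • (H *ᵥ c))) +
        (θ ^ 2 / ν - σ2 * (ν⁻¹ * θ + c ⬝ᵥ k) ^ 2) := by
  rw [hH.dotProduct_mulVec_sub_smul, dotProduct_sub_smul_vecMulVec_mulVec, sub_dotProduct,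
    smul_dotProduct, dotProduct_add, dotProduct_neg, dotProduct_smul,
    dotProduct_comm (H *ᵥ c) b, hH.dotProduct_mulVec_comm b c, smul_eq_mul, smul_eq_mul]
  linear_combination (-θh ^ 2) * inv_eq_of_mul_eq_one_right hσ2 +
    (2 * θh * (ν⁻¹ * θ + c ⬝ᵥ k + c ⬝ᵥ (H *ᵥ b)) -
      σ2 * (ν⁻¹ * θ + c ⬝ᵥ k + c ⬝ᵥ (H *ᵥ b)) ^ 2) *
      mul_inv_cancel₀ (left_ne_zero_of_mul_eq_one hσ2)

theorem exists_pos_gauss1_mul_mvGauss_eq_mul {d p : ℕ} {ν σ2 : ℝ} (hν : 0 < ν) (hσ2 : 0 < σ2)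
    {Ω : Matrix (Fin p) (Fin p) ℝ} {S : Matrix (Fin d) (Fin d) ℝ} (hΩ : 0 < Ω.det)
    (hS : 0 < S.det) (θ : ℝ) (μ : Fin d → ℝ) (m : (Fin d → ℝ) → ℝ)
    (x : ℝ → (Fin d → ℝ) → Fin p → ℝ) (K : ℝ)
    (hK : ∀ θh b, (θh - θ) ^ 2 / ν + x θh b ⬝ᵥ (Ω⁻¹ *ᵥ x θh b) =
      (θh - m b) ^ 2 / σ2 + (b - μ) ⬝ᵥ (S⁻¹ *ᵥ (b - μ)) + K) :
    ∃ C : ℝ, 0 < C ∧ ∀ θh b,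
      gauss1 θ ν θh * mvGauss Ω 0 (x θh b) = C * (gauss1 (m b) σ2 θh * mvGauss S μ b) := by
  refine ⟨(Real.sqrt (2 * π * ν))⁻¹ * ((2 * π) ^ (-(p : ℝ) / 2) * Ω.det ^ (-(1 : ℝ) / 2)) /
      ((Real.sqrt (2 * π * σ2))⁻¹ * ((2 * π) ^ (-(d : ℝ) / 2) * S.det ^ (-(1 : ℝ) / 2))) *
      Real.exp (-K / 2), by positivity, fun θh b => ?_⟩
  have hexp : Real.exp (-(θh - θ) ^ 2 / (2 * ν)) *
      Real.exp (-(1 / 2) * (x θh b ⬝ᵥ (Ω⁻¹ *ᵥ x θh b))) =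
      Real.exp (-K / 2) * (Real.exp (-(θh - m b) ^ 2 / (2 * σ2)) *
        Real.exp (-(1 / 2) * ((b - μ) ⬝ᵥ (S⁻¹ *ᵥ (b - μ))))) := by
    simp only [← Real.exp_add]
    congr 1
    linear_combination (-1 / 2 : ℝ) * hK θh b
  simp only [gauss1, mvGauss, sub_zero]
  rw [mul_mul_mul_comm, hexp]
  field_simp

theorem stmt0_general (d p : ℕ)
    (Ω : Matrix (Fin p) (Fin p) ℝ) (hΩ : Ω.PosDef)
    (Q₂ : Matrix (Fin p) (Fin d) ℝ)
    (H : Matrix (Fin d) (Fin d) ℝ) (hHdef : H = Q₂ᵀ * Ω⁻¹ * Q₂) (hH : H.PosDef)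
    (c : Fin d → ℝ) (t : Fin p → ℝ) (θ ν : ℝ) (hν : 0 < ν)
    (k : Fin d → ℝ) (hk : k = (Q₂ᵀ * Ω⁻¹) *ᵥ t)
    (σ2 : ℝ) (hσ2 : σ2 = (ν⁻¹ + c ⬝ᵥ (H *ᵥ c))⁻¹)
    (Sb : Matrix (Fin d) (Fin d) ℝ) (hSb : Sb = H⁻¹ + ν • vecMulVec c c)
    (μb : Fin d → ℝ)
    (hμb : μb = Sb *ᵥ (-k + (σ2 * (ν⁻¹ * θ + c ⬝ᵥ k)) • (H *ᵥ c)))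
    (μθ : (Fin d → ℝ) → ℝ)
    (hμθ : ∀ b, μθ b = σ2 * (ν⁻¹ * θ + c ⬝ᵥ k + c ⬝ᵥ (H *ᵥ b))) :
    Sb.PosDef ∧
      ∃ C : ℝ, 0 < C ∧ ∀ (θh : ℝ) (b : Fin d → ℝ),
        gauss1 θ ν θh * mvGauss Ω 0 (θh • (-(Q₂ *ᵥ c)) + Q₂ *ᵥ b + t) =
          C * (gauss1 (μθ b) σ2 θh * mvGauss Sb μb b) := by
  have hHs : H.IsSymm := isHermitian_iff_isSymm.mp hH.isHermitian
  have hs : 0 < ν⁻¹ + c ⬝ᵥ (H *ᵥ c) :=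
    add_pos_of_pos_of_nonneg (inv_pos.mpr hν) (hH.posSemidef.dotProduct_mulVec_nonneg c)
  have hSbPD : Sb.PosDef :=
    hSb ▸ hH.inv.add_posSemidef ((posSemidef_vecMulVec_self_star c).smul hν.le)
  have hSbinv : Sb⁻¹ = H - σ2 • vecMulVec (H *ᵥ c) (H *ᵥ c) := by
    rw [hSb, hσ2]
    exact inv_add_smul_vecMulVec hHs (isUnit_iff_ne_zero.mpr hH.det_pos.ne') c hν.ne' hs.ne'
  set w := -k + (σ2 * (ν⁻¹ * θ + c ⬝ᵥ k)) • (H *ᵥ c)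
  refine ⟨hSbPD, exists_pos_gauss1_mul_mvGauss_eq_mul hν (hσ2 ▸ inv_pos.mpr hs) hΩ.det_pos
    hSbPD.det_pos θ μb μθ _ (θ ^ 2 / ν + t ⬝ᵥ (Ω⁻¹ *ᵥ t) - σ2 * (ν⁻¹ * θ + c ⬝ᵥ k) ^ 2 - μb ⬝ᵥ w)
    fun θh b => ?_⟩
  have hx : θh • (-(Q₂ *ᵥ c)) + Q₂ *ᵥ b + t = Q₂ *ᵥ (b - θh • c) + t := by
    rw [mulVec_sub, mulVec_smul]; module
  rw [hx, dotProduct_mulVec_affine (isHermitian_iff_isSymm.mp hΩ.inv.isHermitian), ← hHdef, ← hk,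
    hμb, dotProduct_inv_mulVec_sub_mulVec (isHermitian_iff_isSymm.mp hSbPD.isHermitian)
      (isUnit_iff_ne_zero.mpr hSbPD.det_pos.ne'), hSbinv, hμθ]
  linear_combination joint_exponent_eq_conditional_add_marginal hHs c k b
    (hσ2 ▸ inv_mul_cancel₀ hs.ne') θ θh

theorem stmt0 (d p : ℕ) (hd : 1 ≤ d) (hp : 1 ≤ p)
    (Ω : Matrix (Fin p) (Fin p) ℝ) (hΩ : Ω.PosDef)
    (Q₂ : Matrix (Fin p) (Fin d) ℝ)
    (H : Matrix (Fin d) (Fin d) ℝ) (hHdef : H = Q₂ᵀ * Ω⁻¹ * Q₂) (hH : H.PosDef)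
    (c : Fin d → ℝ) (t : Fin p → ℝ) (θ ν : ℝ) (hν : 0 < ν)
    (k : Fin d → ℝ) (hk : k = (Q₂ᵀ * Ω⁻¹) *ᵥ t)
    (σ2 : ℝ) (hσ2 : σ2 = (ν⁻¹ + c ⬝ᵥ (H *ᵥ c))⁻¹)
    (Sb : Matrix (Fin d) (Fin d) ℝ) (hSb : Sb = H⁻¹ + ν • vecMulVec c c)
    (μb : Fin d → ℝ)
    (hμb : μb = Sb *ᵥ (-k + (σ2 * (ν⁻¹ * θ + c ⬝ᵥ k)) • (H *ᵥ c)))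
    (μθ : (Fin d → ℝ) → ℝ)
    (hμθ : ∀ b, μθ b = σ2 * (ν⁻¹ * θ + c ⬝ᵥ k + c ⬝ᵥ (H *ᵥ b))) :
    Sb.PosDef ∧
      ∃ C : ℝ, 0 < C ∧ ∀ (θh : ℝ) (b : Fin d → ℝ),
        gauss1 θ ν θh * mvGauss Ω 0 (θh • (-(Q₂ *ᵥ c)) + Q₂ *ᵥ b + t) =
          C * (gauss1 (μθ b) σ2 θh * mvGauss Sb μb b) :=
  stmt0_general d p Ω hΩ Q₂ H hHdef hH c t θ ν hν k hk σ2 hσ2 Sb hSb μb hμb μθ hμθ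
end

section
/- Let d, p ≥ 1, Ω ∈ ℝ^{p×p} positive definite, Q₂ ∈ ℝ^{p×d} with H := Q₂ᵀΩ⁻¹Q₂ positive definite, c̃ ∈ ℝ^d, t ∈ ℝ^p, θ ∈ ℝ, ν > 0. Set Q̃₁ = −Q₂c̃, k = Q₂ᵀΩ⁻¹t, σ_θ̂² = (ν⁻¹ + c̃ᵀHc̃)⁻¹, Σ_b = H⁻¹ + ν c̃c̃ᵀ, μ_b = Σ_b(−k + σ_θ̂²Hc̃(ν⁻¹θ + c̃ᵀk)), and μ_θ̂(b) = σ_θ̂²(ν⁻¹θ + c̃ᵀk + c̃ᵀHb). Then for every x ∈ ℝ, the ratio (∫_{b∈O} ∫_{θ̂ ≤ x} φ(θ̂; θ, ν)·φ(Q̃₁θ̂ + Q₂b + t; 0, Ω) dθ̂ db) / (∫_{b∈O} ∫_{θ̂ ∈ ℝ} φ(θ̂; θ, ν)·φ(Q̃₁θ̂ + Q₂b + t; 0, Ω) dθ̂ db) equals (∫_{b∈O} Φ((x − μ_θ̂(b))/σ_θ̂) · φ(b; μ_b, Σ_b) db) / (∫_{b∈O} φ(b; μ_b, Σ_b) db),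 where both denominators are positive and finite. -/
open MeasureTheory Matrix Real

/-- Standard normal CDF `Φ`. -/
noncomputable def stdNormalCDF (x : ℝ) : ℝ :=
  ∫ z in Set.Iic x, Real.exp (-z ^ 2 / 2) / Real.sqrt (2 * π)

/-- The positive orthant in `ℝ^d`. -/
def posOrthant (d : ℕ) : Set (Fin d → ℝ) := {v | ∀ i, 0 < v i}

/-!
Complete the square in the joint exponent. With `y = b - θ̂ c`, the `Ω⁻¹`-quadratic form of
`Q₂ y + t` is `yᵀ H y + 2 yᵀ k + tᵀ Ω⁻¹ t`; adding `(θ̂ - θ)² / ν` and completing the square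
first in `θ̂` and then in `b` turns the exponent into
`(θ̂ - μ_θ̂(b))² / σ² + (b - μ_b)ᵀ (H - σ² (Hc)(Hc)ᵀ) (b - μ_b) + const`,
and by Sherman–Morrison `H - σ² (Hc)(Hc)ᵀ = Σ_b⁻¹`. Hence the joint density is a constant
multiple of `φ(θ̂; μ_θ̂(b), σ²) φ(b; μ_b, Σ_b)`. Integrating out `θ̂` over `ℝ` or over `(-∞, x]`
leaves the factor `1` or `Φ((x - μ_θ̂(b)) / σ)`, and the constant cancels in the ratio. The
denominators are positive because `φ(·; μ_b, Σ_b)` is integrable and positive and the orthant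
is open and nonempty.
-/

open ProbabilityTheory

lemma gauss1_eq_gaussianPDFReal (m : ℝ) {s2 : ℝ} (hs : 0 ≤ s2) :
    gauss1 m s2 = gaussianPDFReal m ⟨s2, hs⟩ :=
  rfl

lemma integral_gauss1 (m : ℝ) {s2 : ℝ} (hs : 0 < s2) : ∫ x, gauss1 m s2 x = 1 := by
  rw [gauss1_eq_gaussianPDFReal m hs.le]
  exact integral_gaussianPDFReal_eq_one m (show (0 : NNReal) < ⟨s2, hs.le⟩ from hs).ne'

lemma gaussianReal_real_apply (m : ℝ) {v : NNReal} (hv : v ≠ 0) (s : Set ℝ) :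
    (gaussianReal m v).real s = ∫ z in s, gaussianPDFReal m v z := by
  rw [measureReal_def, gaussianReal_apply_eq_integral m hv,
    ENNReal.toReal_ofReal (integral_nonneg (gaussianPDFReal_nonneg m v))]

lemma stdNormalCDF_eq_gaussianReal_real_Iic (y : ℝ) :
    stdNormalCDF y = (gaussianReal 0 1).real (Set.Iic y) := by
  rw [gaussianReal_real_apply 0 one_ne_zero, stdNormalCDF]
  simp [gaussianPDFReal, div_eq_inv_mul]

lemma gaussianReal_map_standardize (m : ℝ) {v : NNReal} (hv : v ≠ 0) :
    (gaussianReal m v).map (fun z ↦ (z - m) / √v) = gaussianReal 0 1 := by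
  have hsub : (fun z : ℝ ↦ (z - m) / √v) = (· / √v) ∘ (· - m) := rfl
  rw [hsub, ← Measure.map_map (by fun_prop) (by fun_prop), gaussianReal_map_sub_const,
    gaussianReal_map_div_const, sub_self, zero_div]
  congr 1
  ext
  simp [Real.sq_sqrt, hv]

lemma setIntegral_gauss1_Iic (m : ℝ) {s2 : ℝ} (hs : 0 < s2) (x : ℝ) :
    ∫ z in Set.Iic x, gauss1 m s2 z = stdNormalCDF ((x - m) / √s2) := by
  set v : NNReal := ⟨s2, hs.le⟩
  have hv : v ≠ 0 := (show (0 : NNReal) < v from hs).ne'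
  have hpre : (fun z ↦ (z - m) / √s2) ⁻¹' Set.Iic ((x - m) / √s2) = Set.Iic x := by
    ext z
    simp [div_le_div_iff_of_pos_right (Real.sqrt_pos.mpr hs)]
  rw [gauss1_eq_gaussianPDFReal m hs.le, ← gaussianReal_real_apply m hv,
    stdNormalCDF_eq_gaussianReal_real_Iic, ← gaussianReal_map_standardize m hv,
    map_measureReal_apply (by fun_prop) measurableSet_Iic]
  exact congrArg _ hpre.symm

lemma Matrix.PosDef.exists_pos_mul_sum_sq_le {ι : Type*} [Fintype ι] {M : Matrix ι ι ℝ}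
    (hM : M.PosDef) : ∃ ε > 0, ∀ x : ι → ℝ, ε * ∑ i, x i ^ 2 ≤ x ⬝ᵥ (M *ᵥ x) := by
  rcases isEmpty_or_nonempty ι with hι | hι
  · exact ⟨1, one_pos, fun x ↦ by simp⟩
  -- minimise the quadratic form over the Euclidean unit sphere, then scale
  let q : EuclideanSpace ℝ ι → ℝ := fun y ↦ y.ofLp ⬝ᵥ (M *ᵥ y.ofLp)
  have hq : Continuous q := by
    simp only [q, dotProduct, mulVec]
    fun_prop
  have hq_smul (r : ℝ) (y) : q (r • y) = r ^ 2 * q y := by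
    simp only [q, WithLp.ofLp_smul, mulVec_smul, dotProduct_smul, smul_dotProduct, smul_eq_mul]
    ring
  have hnorm (x : ι → ℝ) : ‖WithLp.toLp 2 x‖ ^ 2 = ∑ i, x i ^ 2 := by
    simp [EuclideanSpace.norm_sq_eq]
  obtain ⟨z, hz, hmin⟩ := (isCompact_sphere (0 : EuclideanSpace ℝ ι) 1).exists_isMinOn
    (NormedSpace.sphere_nonempty.mpr zero_le_one) hq.continuousOn
  have hz0 : z.ofLp ≠ 0 := by
    rintro h
    simp [show z = 0 from WithLp.ofLp_injective 2 h] at hz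
  refine ⟨q z, hM.dotProduct_mulVec_pos hz0, fun x ↦ ?_⟩
  rcases eq_or_ne x 0 with rfl | hx
  · simp
  set y := WithLp.toLp 2 x
  have hy : 0 < ‖y‖ := norm_pos_iff.mpr (by simpa [y] using hx)
  have hu : ‖y‖⁻¹ • y ∈ Metric.sphere (0 : EuclideanSpace ℝ ι) 1 := by
    simp [norm_smul, hy.ne']
  calc q z * ∑ i, x i ^ 2 = ‖y‖ ^ 2 * q z := by rw [hnorm, mul_comm]
    _ ≤ ‖y‖ ^ 2 * q (‖y‖⁻¹ • y) := by gcongr; exact hmin hu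
    _ = x ⬝ᵥ (M *ᵥ x) := by rw [hq_smul]; field_simp; rfl

lemma Matrix.PosDef.integrable_exp_neg_half_dotProduct_mulVec {ι : Type*} [Fintype ι]
    {M : Matrix ι ι ℝ} (hM : M.PosDef) :
    Integrable (fun x : ι → ℝ ↦ exp (-(1 / 2) * (x ⬝ᵥ (M *ᵥ x)))) := by
  obtain ⟨ε, hε, hle⟩ := hM.exists_pos_mul_sum_sq_le
  have hprod : Integrable (fun x : ι → ℝ ↦ ∏ i, exp (-(ε / 2) * x i ^ 2)) :=
    Integrable.fintype_prod fun _ ↦ integrable_exp_neg_mul_sq (by positivity)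
  refine hprod.mono' ?_ (Filter.Eventually.of_forall fun x ↦ ?_)
  · refine Continuous.aestronglyMeasurable ?_
    simp only [dotProduct, mulVec]
    fun_prop
  · rw [Real.norm_of_nonneg (exp_pos _).le, ← exp_sum, exp_le_exp, ← Finset.mul_sum]
    linarith [hle x]

lemma Matrix.PosDef.integrable_mvGauss {d : ℕ} {S : Matrix (Fin d) (Fin d) ℝ} (hS : S.PosDef)
    (μ : Fin d → ℝ) : Integrable (mvGauss S μ) :=
  ((hS.inv.integrable_exp_neg_half_dotProduct_mulVec.comp_sub_right μ).const_mul
    ((2 * π) ^ (-(d : ℝ) / 2) * S.det ^ (-(1 : ℝ) / 2))).congr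
    (Filter.Eventually.of_forall fun x ↦ by simp only [mvGauss, mul_assoc])

lemma Matrix.PosDef.mvGauss_pos {d : ℕ} {S : Matrix (Fin d) (Fin d) ℝ} (hS : S.PosDef)
    (μ x : Fin d → ℝ) : 0 < mvGauss S μ x := by
  unfold mvGauss
  have := hS.det_pos
  positivity

lemma setIntegral_pos_of_isOpen {X : Type*} [TopologicalSpace X] [MeasurableSpace X]
    [OpensMeasurableSpace X] {μ : Measure X} [μ.IsOpenPosMeasure] {U : Set X} {f : X → ℝ}
    (hU : IsOpen U) (hne : U.Nonempty) (hf : IntegrableOn f U μ) (hpos : ∀ x ∈ U, 0 < f x) :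
    0 < ∫ x in U, f x ∂μ := by
  rw [setIntegral_pos_iff_support_of_nonneg_ae
    ((ae_restrict_iff' hU.measurableSet).mpr (Filter.Eventually.of_forall fun x hx ↦
      (hpos x hx).le)) hf]
  exact (hU.measure_pos μ hne).trans_le (measure_mono fun x hx ↦ ⟨(hpos x hx).ne', hx⟩)

lemma isOpen_posOrthant (d : ℕ) : IsOpen (posOrthant d) := by
  simpa [posOrthant, Set.pi, Set.mem_Ioi] using
    isOpen_set_pi Set.finite_univ fun (_ : Fin d) _ ↦ isOpen_Ioi (a := (0 : ℝ))

lemma posOrthant_nonempty (d : ℕ) : (posOrthant d).Nonempty :=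
  ⟨fun _ ↦ 1, fun _ ↦ one_pos⟩

lemma Matrix.PosDef.transpose_eq_self {n : Type*} {A : Matrix n n ℝ} (hA : A.PosDef) : Aᵀ = A :=
  (conjTranspose_eq_transpose_of_trivial A).symm.trans hA.isHermitian

section QuadraticForms

variable {m n R : Type*} [Fintype m] [Fintype n] [CommRing R]

lemma dotProduct_mulVec_comm_of_transpose_eq {A : Matrix n n R} (hA : Aᵀ = A) (u v : n → R) :
    u ⬝ᵥ (A *ᵥ v) = v ⬝ᵥ (A *ᵥ u) := by
  rw [dotProduct_mulVec, ← mulVec_transpose, hA, dotProduct_comm]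

lemma quadForm_mulVec_add {S : Matrix m m R} (hS : Sᵀ = S) (Q : Matrix m n R) (y : n → R)
    (t : m → R) :
    (Q *ᵥ y + t) ⬝ᵥ (S *ᵥ (Q *ᵥ y + t)) =
      y ⬝ᵥ ((Qᵀ * S * Q) *ᵥ y) + 2 * (y ⬝ᵥ ((Qᵀ * S) *ᵥ t)) + t ⬝ᵥ (S *ᵥ t) := by
  have hQ (u : m → R) : y ⬝ᵥ (Qᵀ *ᵥ u) = (Q *ᵥ y) ⬝ᵥ u := by
    rw [mulVec_transpose, dotProduct_comm, ← dotProduct_mulVec, dotProduct_comm]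
  rw [← mulVec_mulVec, ← mulVec_mulVec, ← mulVec_mulVec, hQ, hQ, mulVec_add, dotProduct_add,
    add_dotProduct, add_dotProduct, dotProduct_mulVec_comm_of_transpose_eq hS t]
  ring

lemma quadForm_sub {M : Matrix n n R} (hM : Mᵀ = M) (x μ : n → R) :
    (x - μ) ⬝ᵥ (M *ᵥ (x - μ)) = x ⬝ᵥ (M *ᵥ x) - 2 * (x ⬝ᵥ (M *ᵥ μ)) + μ ⬝ᵥ (M *ᵥ μ) := by
  rw [mulVec_sub, dotProduct_sub, sub_dotProduct, sub_dotProduct,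
    dotProduct_mulVec_comm_of_transpose_eq hM μ x]
  ring

-- Sherman–Morrison
lemma inv_add_smul_vecMulVec_mul [DecidableEq n] {H : Matrix n n R} (hH : Hᵀ = H)
    (hdet : IsUnit H.det) (c : n → R) {ν σ : R} (hσ : σ * (1 + ν * (c ⬝ᵥ (H *ᵥ c))) = ν) :
    (H⁻¹ + ν • vecMulVec c c) * (H - σ • vecMulVec (H *ᵥ c) (H *ᵥ c)) = 1 := by
  have hcH : c ᵥ* H = H *ᵥ c := by rw [← mulVec_transpose, hH]
  have key : (H⁻¹ + ν • vecMulVec c c) * (H - σ • vecMulVec (H *ᵥ c) (H *ᵥ c)) =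
      1 + (ν - σ * (1 + ν * (c ⬝ᵥ (H *ᵥ c)))) • vecMulVec c (H *ᵥ c) := by
    rw [add_mul, mul_sub, mul_sub, nonsing_inv_mul H hdet, Matrix.mul_smul, mul_vecMulVec,
      mulVec_mulVec, nonsing_inv_mul H hdet, one_mulVec, Matrix.smul_mul, vecMulVec_mul, hcH,
      Matrix.smul_mul, Matrix.mul_smul, vecMulVec_mul_vecMulVec, vecMulVec_smul]
    module
  rw [key, hσ, sub_self, zero_smul, add_zero]

end QuadraticForms

lemma Matrix.PosDef.inv_add_smul_vecMulVec {n : Type*} [Fintype n] [DecidableEq n]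
    {H : Matrix n n ℝ} (hH : H.PosDef) {ν : ℝ} (hν : 0 ≤ ν) (c : n → ℝ) :
    (H⁻¹ + ν • vecMulVec c c).PosDef :=
  hH.inv.add_posSemidef (by simpa using (posSemidef_vecMulVec_self_star c).smul hν)

lemma exists_joint_exponent_eq {ι κ : Type*} [Fintype ι] [DecidableEq ι] [Fintype κ]
    [DecidableEq κ] {Ω : Matrix κ κ ℝ} (hΩ : Ω.PosDef) {Q₂ : Matrix κ ι ℝ} {H : Matrix ι ι ℝ}
    (hHdef : H = Q₂ᵀ * Ω⁻¹ * Q₂) (hH : H.PosDef) (c : ι → ℝ) (t : κ → ℝ) (θ : ℝ) {ν : ℝ}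
    (hν : 0 < ν) {k : ι → ℝ} (hk : k = (Q₂ᵀ * Ω⁻¹) *ᵥ t) {σ2 : ℝ}
    (hσ2 : σ2 = (ν⁻¹ + c ⬝ᵥ (H *ᵥ c))⁻¹) {Sb : Matrix ι ι ℝ}
    (hSb : Sb = H⁻¹ + ν • vecMulVec c c) {μb : ι → ℝ}
    (hμb : μb = Sb *ᵥ (-k + (σ2 * (ν⁻¹ * θ + c ⬝ᵥ k)) • (H *ᵥ c))) {μθ : (ι → ℝ) → ℝ}
    (hμθ : ∀ b, μθ b = σ2 * (ν⁻¹ * θ + c ⬝ᵥ k + c ⬝ᵥ (H *ᵥ b))) :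
    ∃ R : ℝ, ∀ (θh : ℝ) (b : ι → ℝ),
      (θh - θ) ^ 2 / ν + (θh • (-(Q₂ *ᵥ c)) + Q₂ *ᵥ b + t) ⬝ᵥ
          (Ω⁻¹ *ᵥ (θh • (-(Q₂ *ᵥ c)) + Q₂ *ᵥ b + t)) =
        (θh - μθ b) ^ 2 / σ2 + (b - μb) ⬝ᵥ (Sb⁻¹ *ᵥ (b - μb)) + R := by
  have hHsymm := hH.transpose_eq_self
  set α := ν⁻¹ * θ + c ⬝ᵥ k
  have hs : 0 ≤ c ⬝ᵥ (H *ᵥ c) := by simpa using hH.posSemidef.dotProduct_mulVec_nonneg c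
  have hσ : σ2 * (ν⁻¹ + c ⬝ᵥ (H *ᵥ c)) = 1 := by
    rw [hσ2]
    exact inv_mul_cancel₀ (by positivity)
  set M := H - σ2 • vecMulVec (H *ᵥ c) (H *ᵥ c)
  have hSbM : Sb * M = 1 := by
    rw [hSb]
    refine inv_add_smul_vecMulVec_mul hHsymm (isUnit_iff_ne_zero.mpr hH.det_pos.ne') c ?_
    linear_combination ν * hσ - σ2 * mul_inv_cancel₀ hν.ne'
  have hMsymm : Mᵀ = M := by
    simp [M, hHsymm, transpose_sub, transpose_smul, transpose_vecMulVec]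
  have hMμb : M *ᵥ μb = -k + (σ2 * α) • (H *ᵥ c) := by
    rw [hμb, mulVec_mulVec, mul_eq_one_comm.mp hSbM, one_mulVec]
  have hMb (b : ι → ℝ) : b ⬝ᵥ (M *ᵥ b) = b ⬝ᵥ (H *ᵥ b) - σ2 * (c ⬝ᵥ (H *ᵥ b)) ^ 2 := by
    simp only [M, sub_mulVec, smul_mulVec, vecMulVec_mulVec, op_smul_eq_smul, dotProduct_sub,
      dotProduct_smul, smul_eq_mul, dotProduct_comm (H *ᵥ c) b,
      dotProduct_mulVec_comm_of_transpose_eq hHsymm b c]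
    ring
  refine ⟨θ ^ 2 / ν + t ⬝ᵥ (Ω⁻¹ *ᵥ t) - σ2 * α ^ 2 - μb ⬝ᵥ (M *ᵥ μb), fun θh b ↦ ?_⟩
  have hw : θh • (-(Q₂ *ᵥ c)) + Q₂ *ᵥ b + t = Q₂ *ᵥ (b - θh • c) + t := by
    rw [mulVec_sub, mulVec_smul]
    module
  rw [hw, quadForm_mulVec_add hΩ.inv.transpose_eq_self, ← hHdef, ← hk, inv_eq_right_inv hSbM,
    quadForm_sub hMsymm, hMμb, hMb, hμθ]
  simp only [mulVec_sub, mulVec_smul, dotProduct_sub, sub_dotProduct, dotProduct_smul,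
    smul_dotProduct, dotProduct_add, dotProduct_neg, smul_eq_mul,
    dotProduct_mulVec_comm_of_transpose_eq hHsymm b c]
  rw [div_eq_mul_inv, div_eq_mul_inv, show σ2⁻¹ = ν⁻¹ + c ⬝ᵥ (H *ᵥ c) by rw [hσ2, inv_inv]]
  linear_combination (2 * θh * (α + c ⬝ᵥ (H *ᵥ b)) - σ2 * (α + c ⬝ᵥ (H *ᵥ b)) ^ 2) * hσ

lemma exists_pos_gauss1_mul_mvGauss_eq {d p : ℕ} {θ ν σ2 R : ℝ} (hν : 0 < ν) (hσ2 : 0 < σ2)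
    {Ω : Matrix (Fin p) (Fin p) ℝ} {S : Matrix (Fin d) (Fin d) ℝ} (hΩ : 0 < Ω.det)
    (hS : 0 < S.det) {w : ℝ → (Fin d → ℝ) → Fin p → ℝ} {m : (Fin d → ℝ) → ℝ} {μ : Fin d → ℝ}
    (h : ∀ θh b, (θh - θ) ^ 2 / ν + w θh b ⬝ᵥ (Ω⁻¹ *ᵥ w θh b) =
      (θh - m b) ^ 2 / σ2 + (b - μ) ⬝ᵥ (S⁻¹ *ᵥ (b - μ)) + R) :
    ∃ K > 0, ∀ θh b, gauss1 θ ν θh * mvGauss Ω 0 (w θh b) =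
      K * (gauss1 (m b) σ2 θh * mvGauss S μ b) := by
  set A := (2 * π) ^ (-(p : ℝ) / 2) * Ω.det ^ (-(1 : ℝ) / 2)
  set B := (2 * π) ^ (-(d : ℝ) / 2) * S.det ^ (-(1 : ℝ) / 2)
  have hB : 0 < B := by positivity
  refine ⟨(√(2 * π * ν))⁻¹ * A / ((√(2 * π * σ2))⁻¹ * B) * exp (-(1 / 2) * R), by positivity,
    fun θh b ↦ ?_⟩
  have hexp : -(θh - θ) ^ 2 / (2 * ν) + -(1 / 2) * (w θh b ⬝ᵥ (Ω⁻¹ *ᵥ w θh b)) =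
      -(1 / 2) * R + (-(θh - m b) ^ 2 / (2 * σ2) +
        -(1 / 2) * ((b - μ) ⬝ᵥ (S⁻¹ *ᵥ (b - μ)))) := by
    linear_combination (-(1 / 2) : ℝ) * h θh b
  simp only [gauss1, mvGauss, sub_zero]
  rw [mul_mul_mul_comm, ← exp_add, hexp, exp_add, exp_add]
  field_simp
  simp only [A, B, neg_div]
  ring

theorem stmt1_general (d p : ℕ)
    (Ω : Matrix (Fin p) (Fin p) ℝ) (hΩ : Ω.PosDef)
    (Q₂ : Matrix (Fin p) (Fin d) ℝ)
    (H : Matrix (Fin d) (Fin d) ℝ) (hHdef : H = Q₂ᵀ * Ω⁻¹ * Q₂) (hH : H.PosDef)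
    (c : Fin d → ℝ) (t : Fin p → ℝ) (θ ν : ℝ) (hν : 0 < ν)
    (k : Fin d → ℝ) (hk : k = (Q₂ᵀ * Ω⁻¹) *ᵥ t)
    (σ2 : ℝ) (hσ2 : σ2 = (ν⁻¹ + c ⬝ᵥ (H *ᵥ c))⁻¹)
    (Sb : Matrix (Fin d) (Fin d) ℝ) (hSb : Sb = H⁻¹ + ν • vecMulVec c c)
    (μb : Fin d → ℝ)
    (hμb : μb = Sb *ᵥ (-k + (σ2 * (ν⁻¹ * θ + c ⬝ᵥ k)) • (H *ᵥ c)))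
    (μθ : (Fin d → ℝ) → ℝ)
    (hμθ : ∀ b, μθ b = σ2 * (ν⁻¹ * θ + c ⬝ᵥ k + c ⬝ᵥ (H *ᵥ b)))
    (joint : ℝ → (Fin d → ℝ) → ℝ)
    (hjoint : ∀ θh b, joint θh b =
      gauss1 θ ν θh * mvGauss Ω 0 (θh • (-(Q₂ *ᵥ c)) + Q₂ *ᵥ b + t)) :
    IntegrableOn (fun b => ∫ θh : ℝ, joint θh b) (posOrthant d) ∧
    0 < (∫ b in posOrthant d, ∫ θh : ℝ, joint θh b) ∧
    IntegrableOn (fun b => mvGauss Sb μb b) (posOrthant d) ∧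
    0 < (∫ b in posOrthant d, mvGauss Sb μb b) ∧
    ∀ x : ℝ,
      (∫ b in posOrthant d, ∫ θh in Set.Iic x, joint θh b) /
          (∫ b in posOrthant d, ∫ θh : ℝ, joint θh b) =
        (∫ b in posOrthant d,
            stdNormalCDF ((x - μθ b) / Real.sqrt σ2) * mvGauss Sb μb b) /
          (∫ b in posOrthant d, mvGauss Sb μb b) := by
  have hSbpos : Sb.PosDef := hSb ▸ hH.inv_add_smul_vecMulVec hν.le c
  have hσpos : 0 < σ2 := by
    have hs : 0 ≤ c ⬝ᵥ (H *ᵥ c) := by simpa using hH.posSemidef.dotProduct_mulVec_nonneg c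
    rw [hσ2]
    positivity
  obtain ⟨R, hR⟩ := exists_joint_exponent_eq hΩ hHdef hH c t θ hν hk hσ2 hSb hμb hμθ
  obtain ⟨K, hK, hfactor⟩ :=
    exists_pos_gauss1_mul_mvGauss_eq hν hσpos hΩ.det_pos hSbpos.det_pos hR
  have hjoint' (b) :
      (fun θh ↦ joint θh b) = fun θh ↦ K * mvGauss Sb μb b * gauss1 (μθ b) σ2 θh := by
    ext θh
    rw [hjoint, hfactor]
    ring
  have hfull (b) : ∫ θh, joint θh b = K * mvGauss Sb μb b := by
    rw [hjoint', integral_const_mul, integral_gauss1 _ hσpos, mul_one]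
  have hIic (x b) : ∫ θh in Set.Iic x, joint θh b =
      K * (stdNormalCDF ((x - μθ b) / √σ2) * mvGauss Sb μb b) := by
    rw [hjoint', integral_const_mul, setIntegral_gauss1_Iic _ hσpos]
    ring
  have hint : IntegrableOn (mvGauss Sb μb) (posOrthant d) :=
    (hSbpos.integrable_mvGauss μb).integrableOn
  have hpos : 0 < ∫ b in posOrthant d, mvGauss Sb μb b :=
    setIntegral_pos_of_isOpen (isOpen_posOrthant d) (posOrthant_nonempty d) hint
      fun b _ ↦ hSbpos.mvGauss_pos μb b
  simp only [hfull, hIic, integral_const_mul]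
  exact ⟨hint.const_mul K, mul_pos hK hpos, hint, hpos,
    fun x ↦ mul_div_mul_left _ _ hK.ne'⟩

theorem stmt1 (d p : ℕ) (hd : 1 ≤ d) (hp : 1 ≤ p)
    (Ω : Matrix (Fin p) (Fin p) ℝ) (hΩ : Ω.PosDef)
    (Q₂ : Matrix (Fin p) (Fin d) ℝ)
    (H : Matrix (Fin d) (Fin d) ℝ) (hHdef : H = Q₂ᵀ * Ω⁻¹ * Q₂) (hH : H.PosDef)
    (c : Fin d → ℝ) (t : Fin p → ℝ) (θ ν : ℝ) (hν : 0 < ν)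
    (k : Fin d → ℝ) (hk : k = (Q₂ᵀ * Ω⁻¹) *ᵥ t)
    (σ2 : ℝ) (hσ2 : σ2 = (ν⁻¹ + c ⬝ᵥ (H *ᵥ c))⁻¹)
    (Sb : Matrix (Fin d) (Fin d) ℝ) (hSb : Sb = H⁻¹ + ν • vecMulVec c c)
    (μb : Fin d → ℝ)
    (hμb : μb = Sb *ᵥ (-k + (σ2 * (ν⁻¹ * θ + c ⬝ᵥ k)) • (H *ᵥ c)))
    (μθ : (Fin d → ℝ) → ℝ)
    (hμθ : ∀ b, μθ b = σ2 * (ν⁻¹ * θ + c ⬝ᵥ k + c ⬝ᵥ (H *ᵥ b)))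
    (joint : ℝ → (Fin d → ℝ) → ℝ)
    (hjoint : ∀ θh b, joint θh b =
      gauss1 θ ν θh * mvGauss Ω 0 (θh • (-(Q₂ *ᵥ c)) + Q₂ *ᵥ b + t)) :
    IntegrableOn (fun b => ∫ θh : ℝ, joint θh b) (posOrthant d) ∧
    0 < (∫ b in posOrthant d, ∫ θh : ℝ, joint θh b) ∧
    IntegrableOn (fun b => mvGauss Sb μb b) (posOrthant d) ∧
    0 < (∫ b in posOrthant d, mvGauss Sb μb b) ∧
    ∀ x : ℝ,
      (∫ b in posOrthant d, ∫ θh in Set.Iic x, joint θh b) /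
          (∫ b in posOrthant d, ∫ θh : ℝ, joint θh b) =
        (∫ b in posOrthant d,
            stdNormalCDF ((x - μθ b) / Real.sqrt σ2) * mvGauss Sb μb b) /
          (∫ b in posOrthant d, mvGauss Sb μb b) :=
  stmt1_general d p Ω hΩ Q₂ H hHdef hH c t θ ν hν k hk σ2 hσ2 Sb hSb μb hμb μθ hμθ joint hjoint
end

section
/- Let X ∈ ℝ^{n×p} with XᵀX positive definite, let M ⊆ {1,…,p} with |M| = d, let J_M ∈ ℝ^{d×p} consist of the rows of the identity matrix I_p with indices in M, and set X_M = X J_Mᵀ; assume X_MᵀX_M is positive definite. Let σ² > 0, κ > 0, let D ∈ ℝ^{d×d} be diagonal with diagonal entries in {−1, +1}, let Σ = σ²(X_MᵀX_M)⁻¹, let η ∈ ℝ^d be nonzero, ν = ηᵀΣη, c̃ = D(ν⁻¹Ση), Ω = κ⁻¹σ²XᵀX, Q₂ = XᵀX_M D, and H = Q₂ᵀΩ⁻¹Q₂. Then: (i) Q₂ᵀΩ⁻¹t = (κ/σ²)·D(J_M t) for every t ∈ ℝ^p; (ii) H = (κ/σ²)·D X_MᵀX_M D; and (iii) (ν⁻¹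 + c̃ᵀHc̃)⁻¹ = ν/(1+κ). -/
/-!
Since `Ω` is a multiple of `XᵀX` and `Q₂ᵀ = D J XᵀX`, the factor `XᵀX` cancels in `Q₂ᵀ Ω⁻¹`,
leaving `(κ/σ²) D J`; hence `H = (κ/σ²) D X_MᵀX_M D`. As `D² = 1` and `X_MᵀX_M Σ = σ² I`,
the quadratic form `c̃ᵀHc̃` collapses to `κ ηᵀΣη / ν² = κ / ν`, so `ν⁻¹ + c̃ᵀHc̃ = (1 + κ) / ν`.
-/

open Matrix

namespace Matrix

variable {K : Type*} [Field K] {m n d : Type*} [Fintype m] [Fintype n] [Fintype d]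
  [DecidableEq n]

theorem inv_smul₀ (k : K) (A : Matrix n n K) : (k • A)⁻¹ = k⁻¹ • A⁻¹ := by
  rcases eq_or_ne k 0 with rfl | hk
  · simp
  by_cases hA : IsUnit A.det
  · exact inv_smul' A (Units.mk0 k hk) hA
  · have hkA : ¬IsUnit (k • A).det := by
      simpa [det_smul, isUnit_iff_ne_zero, hk] using hA
    rw [nonsing_inv_apply_not_isUnit _ hA, nonsing_inv_apply_not_isUnit _ hkA, smul_zero]

theorem diagonal_mul_self_eq_one {s : n → K} (hs : ∀ i, s i * s i = 1) :
    diagonal s * diagonal s = 1 := by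
  rw [diagonal_mul_diagonal, ← diagonal_one]
  exact congrArg diagonal (funext hs)

theorem transpose_gram_mul_mul_inv_smul_gram (X : Matrix m n K) (J : Matrix d n K)
    {D : Matrix d d K} (hD : Dᵀ = D) (hX : IsUnit (Xᵀ * X).det) (k : K) :
    (Xᵀ * (X * Jᵀ) * D)ᵀ * (k • (Xᵀ * X))⁻¹ = k⁻¹ • (D * J) := by
  rw [inv_smul₀, Matrix.mul_smul]
  congr 1
  simp only [transpose_mul, transpose_transpose, hD, Matrix.mul_assoc, mul_nonsing_inv _ hX,
    Matrix.mul_one]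

theorem dotProduct_conj_mulVec_conj {D : Matrix n n K} (hDD : D * D = 1) (hD : Dᵀ = D)
    (B : Matrix n n K) (v w : n → K) :
    (D *ᵥ v) ⬝ᵥ ((D * B * D) *ᵥ (D *ᵥ w)) = v ⬝ᵥ (B *ᵥ w) := by
  rw [← vecMul_transpose, hD, ← dotProduct_mulVec, mulVec_mulVec, mulVec_mulVec]
  simp only [← Matrix.mul_assoc, hDD, Matrix.one_mul]
  rw [Matrix.mul_assoc B, hDD, Matrix.mul_one]

theorem dotProduct_smul_inv_mulVec {B : Matrix n n K} (hB : IsUnit B.det) (σ : K) (η : n → K) :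
    ((σ • B⁻¹) *ᵥ η) ⬝ᵥ (B *ᵥ ((σ • B⁻¹) *ᵥ η)) = σ * (η ⬝ᵥ ((σ • B⁻¹) *ᵥ η)) := by
  rw [mulVec_mulVec, Matrix.mul_smul, mul_nonsing_inv _ hB, smul_mulVec σ (1 : Matrix n n K),
    one_mulVec, dotProduct_smul, dotProduct_comm, smul_eq_mul]

end Matrix

theorem stmt2_general (n p d : ℕ)
    (X : Matrix (Fin n) (Fin p) ℝ) (hX : (Xᵀ * X).PosDef)
    (J : Matrix (Fin d) (Fin p) ℝ)
    (XM : Matrix (Fin n) (Fin d) ℝ) (hXM : XM = X * Jᵀ)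
    (hXMpd : (XMᵀ * XM).PosDef)
    (σ2 κ : ℝ) (hσ2 : 0 < σ2)
    (s : Fin d → ℝ) (hs : ∀ i, s i = 1 ∨ s i = -1)
    (D : Matrix (Fin d) (Fin d) ℝ) (hD : D = Matrix.diagonal s)
    (S : Matrix (Fin d) (Fin d) ℝ) (hS : S = σ2 • (XMᵀ * XM)⁻¹)
    (η : Fin d → ℝ)
    (ν : ℝ) (hν : ν = η ⬝ᵥ (S *ᵥ η))
    (c : Fin d → ℝ) (hc : c = D *ᵥ (ν⁻¹ • (S *ᵥ η)))
    (Ω : Matrix (Fin p) (Fin p) ℝ) (hΩ : Ω = κ⁻¹ • (σ2 • (Xᵀ * X)))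
    (Q₂ : Matrix (Fin p) (Fin d) ℝ) (hQ₂ : Q₂ = Xᵀ * XM * D)
    (H : Matrix (Fin d) (Fin d) ℝ) (hH : H = Q₂ᵀ * Ω⁻¹ * Q₂) :
    (∀ t : Fin p → ℝ, (Q₂ᵀ * Ω⁻¹) *ᵥ t = (κ / σ2) • (D *ᵥ (J *ᵥ t))) ∧
    H = (κ / σ2) • (D * (XMᵀ * XM) * D) ∧
    (ν⁻¹ + c ⬝ᵥ (H *ᵥ c))⁻¹ = ν / (1 + κ) := by
  have hDt : Dᵀ = D := hD ▸ diagonal_transpose s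
  have hDD : D * D = 1 := hD ▸ diagonal_mul_self_eq_one fun i => by
    rcases hs i with h | h <;> simp [h]
  have hQΩ : Q₂ᵀ * Ω⁻¹ = (κ / σ2) • (D * J) := by
    rw [hQ₂, hXM, hΩ, smul_smul,
      transpose_gram_mul_mul_inv_smul_gram X J hDt hX.det_pos.ne'.isUnit, mul_inv, inv_inv,
      div_eq_inv_mul, mul_comm]
  have hH' : H = (κ / σ2) • (D * (XMᵀ * XM) * D) := by
    rw [hH, hQΩ, smul_mul, hQ₂, hXM, transpose_mul, transpose_transpose]
    simp only [Matrix.mul_assoc]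
  have hcHc : c ⬝ᵥ (H *ᵥ c) = κ * ν⁻¹ := by
    rw [hc, mulVec_smul, hH', smul_mulVec, mulVec_smul, smul_dotProduct, dotProduct_smul,
      dotProduct_smul, dotProduct_conj_mulVec_conj hDD hDt, hS,
      dotProduct_smul_inv_mulVec hXMpd.det_pos.ne'.isUnit, ← hS, ← hν, smul_eq_mul, smul_eq_mul,
      smul_eq_mul]
    calc ν⁻¹ * (κ / σ2 * (ν⁻¹ * (σ2 * ν))) = κ * (σ2 / σ2) * (ν⁻¹ * ν⁻¹ * ν) := by ring
      _ = κ * ν⁻¹ := by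
        rw [div_self hσ2.ne', mul_one]
        simpa only [inv_inv] using congrArg (κ * ·) (mul_self_mul_inv ν⁻¹)
  refine ⟨fun t => by rw [hQΩ, smul_mulVec, mulVec_mulVec], hH', ?_⟩
  rw [hcHc, ← one_add_mul, mul_inv, inv_inv, div_eq_mul_inv, mul_comm]

theorem stmt2 (n p d : ℕ) (hn : 1 ≤ n) (hp : 1 ≤ p) (hd : 1 ≤ d)
    (X : Matrix (Fin n) (Fin p) ℝ) (hX : (Xᵀ * X).PosDef)
    (M : Finset (Fin p)) (hMcard : M.card = d)
    (J : Matrix (Fin d) (Fin p) ℝ)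
    (hJ : ∀ i j, J i j = if (M.orderIsoOfFin hMcard i : Fin p) = j then 1 else 0)
    (XM : Matrix (Fin n) (Fin d) ℝ) (hXM : XM = X * Jᵀ)
    (hXMpd : (XMᵀ * XM).PosDef)
    (σ2 κ : ℝ) (hσ2 : 0 < σ2) (hκ : 0 < κ)
    (s : Fin d → ℝ) (hs : ∀ i, s i = 1 ∨ s i = -1)
    (D : Matrix (Fin d) (Fin d) ℝ) (hD : D = Matrix.diagonal s)
    (S : Matrix (Fin d) (Fin d) ℝ) (hS : S = σ2 • (XMᵀ * XM)⁻¹)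
    (η : Fin d → ℝ) (hη : η ≠ 0)
    (ν : ℝ) (hν : ν = η ⬝ᵥ (S *ᵥ η))
    (c : Fin d → ℝ) (hc : c = D *ᵥ (ν⁻¹ • (S *ᵥ η)))
    (Ω : Matrix (Fin p) (Fin p) ℝ) (hΩ : Ω = κ⁻¹ • (σ2 • (Xᵀ * X)))
    (Q₂ : Matrix (Fin p) (Fin d) ℝ) (hQ₂ : Q₂ = Xᵀ * XM * D)
    (H : Matrix (Fin d) (Fin d) ℝ) (hH : H = Q₂ᵀ * Ω⁻¹ * Q₂) :
    (∀ t : Fin p → ℝ, (Q₂ᵀ * Ω⁻¹) *ᵥ t = (κ / σ2) • (D *ᵥ (J *ᵥ t))) ∧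
    H = (κ / σ2) • (D * (XMᵀ * XM) * D) ∧
    (ν⁻¹ + c ⬝ᵥ (H *ᵥ c))⁻¹ = ν / (1 + κ) :=
  stmt2_general n p d X hX J XM hXM hXMpd σ2 κ hσ2 s hs D hD S hS η ν hν c hc Ω hΩ Q₂ hQ₂ H hH
end

section
/- Let d ≥ 1, let Σ, H ∈ ℝ^{d×d} be positive definite, let D ∈ ℝ^{d×d} be diagonal with diagonal entries in {−1, +1}, let Σ_b = H⁻¹ + DΣD, and let M ∈ ℝ^{d×d} be symmetric positive semidefinite. Then the matrix Σ⁻¹ + D(Σ_b⁻¹ M Σ_b⁻¹ − Σ_b⁻¹)D is positive definite. -/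
/-!
By the Woodbury identity, `Σ⁻¹ - Dᴴ (H⁻¹ + D Σ Dᴴ)⁻¹ D = (Σ + Σ Dᴴ H D Σ)⁻¹`, which is positive
definite. The matrix of the theorem is this one plus the positive semidefinite
`(Σ_b⁻¹ D)ᴴ M (Σ_b⁻¹ D)`.
-/

open Matrix
open scoped ComplexOrder

namespace Matrix.PosDef

variable {m n 𝕜 : Type*} [Fintype m] [Fintype n] [DecidableEq m] [DecidableEq n] [RCLike 𝕜]

theorem inv_sub_conjTranspose_mul_inv_add_mul {S : Matrix n n 𝕜} {H : Matrix m m 𝕜}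
    (hS : S.PosDef) (hH : H.PosDef) (D : Matrix m n 𝕜) :
    (S⁻¹ - Dᴴ * (H⁻¹ + D * S * Dᴴ)⁻¹ * D).PosDef := by
  have hSdet : IsUnit S.det := (isUnit_iff_isUnit_det S).mp hS.isUnit
  have hInner : (H⁻¹ + D * S * Dᴴ).PosDef :=
    hH.inv.add_posSemidef (hS.posSemidef.mul_mul_conjTranspose_same D)
  have woodbury : S⁻¹ - Dᴴ * (H⁻¹ + D * S * Dᴴ)⁻¹ * D = (S + (D * S)ᴴ * H * (D * S))⁻¹ := by
    have hUnit : IsUnit (H⁻¹ + D * S * S⁻¹ * (S * Dᴴ)) := by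
      simpa only [mul_nonsing_inv_cancel_right _ _ hSdet, ← Matrix.mul_assoc] using hInner.isUnit
    rw [conjTranspose_mul, hS.isHermitian.eq,
      add_mul_mul_inv_eq_sub _ _ _ _ hS.isUnit hH.isUnit hUnit]
    simp only [nonsing_inv_mul_cancel_left _ _ hSdet, ← Matrix.mul_assoc,
      mul_nonsing_inv_cancel_right _ _ hSdet]
  rw [woodbury]
  exact (hS.add_posSemidef (hH.posSemidef.conjTranspose_mul_mul_same _)).inv

end Matrix.PosDef

theorem stmt9_general (d : ℕ)
    (S H : Matrix (Fin d) (Fin d) ℝ) (hS : S.PosDef) (hH : H.PosDef)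
    (s : Fin d → ℝ)
    (D : Matrix (Fin d) (Fin d) ℝ) (hD : D = Matrix.diagonal s)
    (Sb : Matrix (Fin d) (Fin d) ℝ) (hSb : Sb = H⁻¹ + D * S * D)
    (M : Matrix (Fin d) (Fin d) ℝ) (hM : M.PosSemidef) :
    (S⁻¹ + D * (Sb⁻¹ * M * Sb⁻¹ - Sb⁻¹) * D).PosDef := by
  have hDH : Dᴴ = D := by simp [hD]
  have hSbH : Sb⁻¹ᴴ = Sb⁻¹ := by
    rw [conjTranspose_nonsing_inv, hSb, conjTranspose_add, hH.inv.isHermitian.eq,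
      conjTranspose_mul, conjTranspose_mul, hDH, hS.isHermitian.eq, Matrix.mul_assoc]
  have hsplit : S⁻¹ + D * (Sb⁻¹ * M * Sb⁻¹ - Sb⁻¹) * D =
      (S⁻¹ - Dᴴ * Sb⁻¹ * D) + (Sb⁻¹ * D)ᴴ * M * (Sb⁻¹ * D) := by
    rw [conjTranspose_mul, hDH, hSbH]
    noncomm_ring
  rw [hsplit]
  refine PosDef.add_posSemidef ?_ (hM.conjTranspose_mul_mul_same _)
  simpa only [hSb, hDH] using hS.inv_sub_conjTranspose_mul_inv_add_mul hH D

theorem stmt9 (d : ℕ) (hd : 1 ≤ d)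
    (S H : Matrix (Fin d) (Fin d) ℝ) (hS : S.PosDef) (hH : H.PosDef)
    (s : Fin d → ℝ) (hs : ∀ i, s i = 1 ∨ s i = -1)
    (D : Matrix (Fin d) (Fin d) ℝ) (hD : D = Matrix.diagonal s)
    (Sb : Matrix (Fin d) (Fin d) ℝ) (hSb : Sb = H⁻¹ + D * S * D)
    (M : Matrix (Fin d) (Fin d) ℝ) (hM : M.PosSemidef) :
    (S⁻¹ + D * (Sb⁻¹ * M * Sb⁻¹ - Sb⁻¹) * D).PosDef :=
  stmt9_general d S H hS hH s D hD Sb hSb M hM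
end
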